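/- Under the setting of the preceding convergence result (with ξ(h₀), μ(h₀), ξ∞, μ∞ defined as above), for every t > 0 one has s(t,h₀) = 2ξ(h₀)√(αt) → s∞(t) = 2ξ∞√(αt) and r(t,h₀) = 2μ(h₀)√(αt) → r∞(t) = 2μ∞√(αt) as h₀ → +∞; moreover, for every t > 0 and every x with 0 < x < s∞(t), the temperature T(x,t,h₀) = -(h₀D∞√(πα)/k)·erf(ξ(h₀))/(1 + (h₀√(πα)/k)·erf(ξ(h₀)))·[1 - erf(x/(2√(αt)))/erf(ξ(h₀))] converges to T∞(x,t) = -D∞[1 - erf(x/(2√(αt)))/erf(ξ∞)] as h₀ → +∞. -/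

import Mathlib

/-!
The residual `C e^{-x²}/(d + erf x) - x - A (d + erf x) e^{x²}` of the interface equation is
strictly decreasing in `x > 0` and in `d ≥ 0`, and continuous in `d`. So the root `ξ(h₀)` for
`d = k/(h₀√(πα))` stays below the root `ξ∞` for `d = 0`, and eventually exceeds any smaller
positive `x` (where the residual at `d = 0` is positive); hence `ξ(h₀) → ξ∞` as `d → 0`.
Rewritten in terms of `d`, both `μ(h₀)` and `T(x,t,h₀)` are continuous in `(d, ξ)` at `(0, ξ∞)`.
-/

open Real Filter Set Topology

/-- The error function `erf x = (2/√π) ∫₀ˣ exp(-t²) dt`. -/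
noncomputable def erf (x : ℝ) : ℝ := (2 / Real.sqrt π) * ∫ t in (0:ℝ)..x, Real.exp (-t ^ 2)

lemma intervalIntegrable_exp_neg_sq (a b : ℝ) :
    IntervalIntegrable (fun t => Real.exp (-t ^ 2)) MeasureTheory.volume a b :=
  (by fun_prop : Continuous fun t : ℝ => Real.exp (-t ^ 2)).intervalIntegrable a b

lemma continuous_erf : Continuous erf :=
  continuous_const.mul (intervalIntegral.continuous_primitive intervalIntegrable_exp_neg_sq 0)

lemma erf_strictMono : StrictMono erf := by
  intro a b hab
  have hpos : 0 < ∫ t in a..b, Real.exp (-t ^ 2) :=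
    intervalIntegral.intervalIntegral_pos_of_pos (intervalIntegrable_exp_neg_sq a b)
      (fun _ => Real.exp_pos _) hab
  have hsplit : (∫ t in (0:ℝ)..b, Real.exp (-t ^ 2)) - ∫ t in (0:ℝ)..a, Real.exp (-t ^ 2)
      = ∫ t in a..b, Real.exp (-t ^ 2) :=
    intervalIntegral.integral_interval_sub_left (intervalIntegrable_exp_neg_sq 0 b)
      (intervalIntegrable_exp_neg_sq 0 a)
  unfold erf
  have : 0 < 2 / Real.sqrt π := by positivity
  nlinarith

lemma erf_pos {x : ℝ} (hx : 0 < x) : 0 < erf x := by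
  simpa [erf] using erf_strictMono hx

/-- The interface equation reads `interfaceResidual C A d ξ = 0`, with `d = k/(h₀√(πα))` for the
convective condition and `d = 0` for the prescribed temperature. -/
noncomputable def interfaceResidual (C A d x : ℝ) : ℝ :=
  C * Real.exp (-x ^ 2) / (d + erf x) - (x + A * (d + erf x) * Real.exp (x ^ 2))

section interfaceResidual

variable {C A d x : ℝ}

lemma interfaceResidual_strictAntiOn (hC : 0 ≤ C) (hA : 0 ≤ A) (hd : 0 ≤ d) :
    StrictAntiOn (interfaceResidual C A d) (Ioi 0) := by
  intro x (hx : 0 < x) y _ hxy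
  have hex : 0 < erf x := erf_pos hx
  have herf : erf x ≤ erf y := erf_strictMono.monotone hxy.le
  have hsq : x ^ 2 ≤ y ^ 2 := pow_le_pow_left₀ hx.le hxy.le 2
  have hfrac : C * Real.exp (-y ^ 2) / (d + erf y) ≤ C * Real.exp (-x ^ 2) / (d + erf x) := by
    gcongr
  have hprod : A * (d + erf x) * Real.exp (x ^ 2) ≤ A * (d + erf y) * Real.exp (y ^ 2) := by
    have : 0 ≤ A * (d + erf y) := mul_nonneg hA (by linarith)
    gcongr
  unfold interfaceResidual
  linarith

lemma interfaceResidual_lt_interfaceResidual_zero (hC : 0 ≤ C) (hA : 0 < A) (hd : 0 < d)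
    (hx : 0 < x) : interfaceResidual C A d x < interfaceResidual C A 0 x := by
  have hex : 0 < erf x := erf_pos hx
  have hfrac : C * Real.exp (-x ^ 2) / (d + erf x) ≤ C * Real.exp (-x ^ 2) / (0 + erf x) := by
    gcongr
  have hprod : A * (0 + erf x) * Real.exp (x ^ 2) < A * (d + erf x) * Real.exp (x ^ 2) := by
    gcongr
  unfold interfaceResidual
  linarith

lemma tendsto_interfaceResidual_zero (hx : 0 < x) :
    Tendsto (fun d => interfaceResidual C A d x) (𝓝 0) (𝓝 (interfaceResidual C A 0 x)) := by
  have : (0 : ℝ) + erf x ≠ 0 := by simp [(erf_pos hx).ne']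
  unfold interfaceResidual
  exact ContinuousAt.tendsto (by fun_prop (disch := exact this))

lemma interfaceResidual_zero_eq_zero_iff (hx : 0 < x) :
    interfaceResidual C A 0 x = 0 ↔
      (x + A * (erf x / Real.exp (-x ^ 2))) / (Real.exp (-x ^ 2) / erf x) = C := by
  have hex : 0 < erf x := erf_pos hx
  rw [interfaceResidual, zero_add, Real.exp_neg, sub_eq_zero, eq_comm (b := C)]
  field_simp

lemma lt_of_interfaceResidual_eq_zero (hC : 0 ≤ C) (hA : 0 < A) {y : ℝ} (hd : 0 < d)
    (hx : 0 < x) (hy : 0 < y) (hdx : interfaceResidual C A d x = 0)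
    (h0y : interfaceResidual C A 0 y = 0) : x < y := by
  by_contra! hyx
  have h1 := (interfaceResidual_strictAntiOn hC hA.le hd.le).antitoneOn hy hx hyx
  have h2 := interfaceResidual_lt_interfaceResidual_zero hC hA hd hy
  linarith

lemma tendsto_of_interfaceResidual_eq_zero {ι : Type*} {l : Filter ι} {d ξ : ι → ℝ} {ξ₀ : ℝ}
    (hC : 0 ≤ C) (hA : 0 < A) (hd : Tendsto d l (𝓝 0)) (hd_pos : ∀ᶠ i in l, 0 < d i)
    (hξ_pos : ∀ᶠ i in l, 0 < ξ i) (hξ : ∀ᶠ i in l, interfaceResidual C A (d i) (ξ i) = 0)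
    (hξ₀ : 0 < ξ₀) (hξ₀_eq : interfaceResidual C A 0 ξ₀ = 0) : Tendsto ξ l (𝓝 ξ₀) := by
  refine tendsto_order.2 ⟨fun a ha => ?_, fun b hb => ?_⟩
  · set x := max a (ξ₀ / 2)
    have hx : 0 < x := lt_max_of_lt_right (half_pos hξ₀)
    have hxξ₀ : x < ξ₀ := max_lt ha (half_lt_self hξ₀)
    have hres : 0 < interfaceResidual C A 0 x := by
      simpa [hξ₀_eq] using interfaceResidual_strictAntiOn hC hA.le le_rfl hx hξ₀ hxξ₀
    filter_upwards [((tendsto_interfaceResidual_zero hx).comp hd).eventually (lt_mem_nhds hres),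
      hd_pos, hξ_pos, hξ] with i hi hdi hξi hξi_eq
    refine (show a ≤ x from le_max_left _ _).trans_lt (not_le.1 fun hle => ?_)
    have := (interfaceResidual_strictAntiOn hC hA.le hdi.le).antitoneOn hξi hx hle
    simp only [Function.comp_apply] at hi
    linarith
  · filter_upwards [hd_pos, hξ_pos, hξ] with i hdi hξi hξi_eq
    exact (lt_of_interfaceResidual_eq_zero hC hA hdi hξi hξ₀ hξi_eq hξ₀_eq).trans hb

end interfaceResidual
theorem stmt_10_general (ρ c k ℓ γ Dinf α ε h₀star : ℝ)
    (hρ : 0 < ρ) (hc : 0 < c) (hk : 0 < k) (hℓ : 0 < ℓ) (hγ : 0 < γ) (hD : 0 < Dinf)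
    (hα : α = k / (ρ * c)) (hε1 : ε < 1)
    (ξ μ : ℝ → ℝ) (ξinf μinf : ℝ)
    (hξpos : ∀ h₀ > h₀star, 0 < ξ h₀)
    (hξeq : ∀ h₀ > h₀star,
      (Dinf * c / (ℓ * Real.sqrt π)) * Real.exp (-(ξ h₀) ^ 2) /
          (k / (h₀ * Real.sqrt (π * α)) + erf (ξ h₀)) =
        ξ h₀ + (γ * (1 - ε) * Real.sqrt π / (2 * Dinf)) *
          (k / (h₀ * Real.sqrt (π * α)) + erf (ξ h₀)) * Real.exp ((ξ h₀) ^ 2))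
    (hμ : ∀ h₀ > h₀star, μ h₀ = ξ h₀ + (γ * k / (2 * Dinf * h₀ * Real.sqrt α)) *
      Real.exp ((ξ h₀) ^ 2) * (1 + (h₀ * Real.sqrt (π * α) / k) * erf (ξ h₀)))
    (hξinfpos : 0 < ξinf)
    (hξinfeq : (ξinf + (γ * (1 - ε) * Real.sqrt π / (2 * Dinf)) *
        (erf ξinf / Real.exp (-ξinf ^ 2))) / (Real.exp (-ξinf ^ 2) / erf ξinf) =
      Dinf * c / (ℓ * Real.sqrt π))
    (hμinf : μinf = ξinf + (γ * Real.sqrt π / (2 * Dinf)) * Real.exp (ξinf ^ 2) * erf ξinf) :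
    ∀ t > (0:ℝ),
      Tendsto (fun h₀ => 2 * ξ h₀ * Real.sqrt (α * t)) atTop
        (nhds (2 * ξinf * Real.sqrt (α * t))) ∧
      Tendsto (fun h₀ => 2 * μ h₀ * Real.sqrt (α * t)) atTop
        (nhds (2 * μinf * Real.sqrt (α * t))) ∧
      ∀ x, 0 < x → x < 2 * ξinf * Real.sqrt (α * t) →
        Tendsto (fun h₀ =>
            -(h₀ * Dinf * Real.sqrt (π * α) / k) *
              (erf (ξ h₀) / (1 + (h₀ * Real.sqrt (π * α) / k) * erf (ξ h₀))) *
              (1 - erf (x / (2 * Real.sqrt (α * t))) / erf (ξ h₀))) atTop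
          (nhds (-Dinf * (1 - erf (x / (2 * Real.sqrt (α * t))) / erf ξinf))) := by
  intro t _
  have hα_pos : 0 < α := by rw [hα]; positivity
  have hπα : 0 < Real.sqrt (π * α) := by positivity
  set d : ℝ → ℝ := fun h₀ => k / (h₀ * Real.sqrt (π * α)) with hd_def
  have hd : Tendsto d atTop (𝓝 0) :=
    tendsto_const_nhds.div_atTop (tendsto_id.atTop_mul_const hπα)
  have hξ_lim : Tendsto ξ atTop (𝓝 ξinf) := by
    refine tendsto_of_interfaceResidual_eq_zero (C := Dinf * c / (ℓ * Real.sqrt π))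
      (A := γ * (1 - ε) * Real.sqrt π / (2 * Dinf)) (by positivity) ?_ hd ?_ ?_ ?_ hξinfpos
      ((interfaceResidual_zero_eq_zero_iff hξinfpos).2 hξinfeq)
    · have : 0 < 1 - ε := by linarith
      positivity
    · filter_upwards [eventually_gt_atTop 0] with h₀ hh₀_pos using by positivity
    · filter_upwards [eventually_gt_atTop h₀star] with h₀ hh₀ using hξpos h₀ hh₀
    · filter_upwards [eventually_gt_atTop h₀star] with h₀ hh₀ using sub_eq_zero.2 (hξeq h₀ hh₀)
  have herf_lim : Tendsto (fun h₀ => erf (ξ h₀)) atTop (𝓝 (erf ξinf)) :=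
    (continuous_erf.tendsto _).comp hξ_lim
  have hden : Tendsto (fun h₀ => d h₀ + erf (ξ h₀)) atTop (𝓝 (erf ξinf)) := by
    simpa using hd.add herf_lim
  have hexp_lim : Tendsto (fun h₀ => Real.exp (ξ h₀ ^ 2)) atTop (𝓝 (Real.exp (ξinf ^ 2))) :=
    ((by fun_prop : Continuous fun x : ℝ => Real.exp (x ^ 2)).tendsto _).comp hξ_lim
  refine ⟨(hξ_lim.const_mul 2).mul_const _, ?_, fun x _ _ => ?_⟩
  · have hμ_lim : Tendsto μ atTop (𝓝 μinf) := by
      rw [hμinf]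
      refine Tendsto.congr' ?_ (hξ_lim.add ((tendsto_const_nhds.mul hexp_lim).mul hden))
      filter_upwards [eventually_gt_atTop h₀star, eventually_gt_atTop 0] with h₀ hh₀ hh₀_pos
      have hsα : 0 < Real.sqrt α := by positivity
      rw [hμ h₀ hh₀, hd_def, Real.sqrt_mul Real.pi_pos.le α]
      field_simp
    exact (hμ_lim.const_mul 2).mul_const _
  · set E := erf (x / (2 * Real.sqrt (α * t)))
    have hT : Tendsto (fun h₀ => -Dinf * (erf (ξ h₀) / (d h₀ + erf (ξ h₀))) * (1 - E / erf (ξ h₀)))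
        atTop (𝓝 (-Dinf * (erf ξinf / erf ξinf) * (1 - E / erf ξinf))) :=
      (tendsto_const_nhds.mul (herf_lim.div hden (erf_pos hξinfpos).ne')).mul
        (tendsto_const_nhds.sub (tendsto_const_nhds.div herf_lim (erf_pos hξinfpos).ne'))
    rw [div_self (erf_pos hξinfpos).ne', mul_one] at hT
    refine hT.congr' ?_
    filter_upwards [eventually_gt_atTop h₀star, eventually_gt_atTop 0] with h₀ hh₀ hh₀_pos
    have hξ_erf := erf_pos (hξpos h₀ hh₀)
    rw [hd_def]
    field_simp

/-- As `h₀ → +∞`, the free boundaries `s(t,h₀) = 2ξ(h₀)√(αt)`, `r(t,h₀) = 2μ(h₀)√(αt)`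
and the temperature `T(x,t,h₀)` of the convective problem converge to the free boundaries
`s∞(t)`, `r∞(t)` and the temperature `T∞(x,t)` of the problem with prescribed temperature
`-D∞` at the fixed face. -/
theorem stmt_10 (ρ c k ℓ γ Dinf α ε h₀star : ℝ)
    (hρ : 0 < ρ) (hc : 0 < c) (hk : 0 < k) (hℓ : 0 < ℓ) (hγ : 0 < γ) (hD : 0 < Dinf)
    (hα : α = k / (ρ * c)) (hε0 : 0 < ε) (hε1 : ε < 1)
    (hstar : h₀star = (1 / Dinf) * Real.sqrt (γ * (1 - ε) * ρ * ℓ * k / 2))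
    (ξ μ : ℝ → ℝ) (ξinf μinf : ℝ)
    (hξpos : ∀ h₀ > h₀star, 0 < ξ h₀)
    (hξeq : ∀ h₀ > h₀star,
      (Dinf * c / (ℓ * Real.sqrt π)) * Real.exp (-(ξ h₀) ^ 2) /
          (k / (h₀ * Real.sqrt (π * α)) + erf (ξ h₀)) =
        ξ h₀ + (γ * (1 - ε) * Real.sqrt π / (2 * Dinf)) *
          (k / (h₀ * Real.sqrt (π * α)) + erf (ξ h₀)) * Real.exp ((ξ h₀) ^ 2))
    (hξuniq : ∀ h₀ > h₀star, ∀ y > (0:ℝ),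
      (Dinf * c / (ℓ * Real.sqrt π)) * Real.exp (-y ^ 2) /
          (k / (h₀ * Real.sqrt (π * α)) + erf y) =
        y + (γ * (1 - ε) * Real.sqrt π / (2 * Dinf)) *
          (k / (h₀ * Real.sqrt (π * α)) + erf y) * Real.exp (y ^ 2) → y = ξ h₀)
    (hμ : ∀ h₀ > h₀star, μ h₀ = ξ h₀ + (γ * k / (2 * Dinf * h₀ * Real.sqrt α)) *
      Real.exp ((ξ h₀) ^ 2) * (1 + (h₀ * Real.sqrt (π * α) / k) * erf (ξ h₀)))
    (hξinfpos : 0 < ξinf)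
    (hξinfeq : (ξinf + (γ * (1 - ε) * Real.sqrt π / (2 * Dinf)) *
        (erf ξinf / Real.exp (-ξinf ^ 2))) / (Real.exp (-ξinf ^ 2) / erf ξinf) =
      Dinf * c / (ℓ * Real.sqrt π))
    (hξinfuniq : ∀ y > (0:ℝ),
      (y + (γ * (1 - ε) * Real.sqrt π / (2 * Dinf)) *
          (erf y / Real.exp (-y ^ 2))) / (Real.exp (-y ^ 2) / erf y) =
        Dinf * c / (ℓ * Real.sqrt π) → y = ξinf)
    (hμinf : μinf = ξinf + (γ * Real.sqrt π / (2 * Dinf)) * Real.exp (ξinf ^ 2) * erf ξinf) :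
    ∀ t > (0:ℝ),
      Tendsto (fun h₀ => 2 * ξ h₀ * Real.sqrt (α * t)) atTop
        (nhds (2 * ξinf * Real.sqrt (α * t))) ∧
      Tendsto (fun h₀ => 2 * μ h₀ * Real.sqrt (α * t)) atTop
        (nhds (2 * μinf * Real.sqrt (α * t))) ∧
      ∀ x, 0 < x → x < 2 * ξinf * Real.sqrt (α * t) →
        Tendsto (fun h₀ =>
            -(h₀ * Dinf * Real.sqrt (π * α) / k) *
              (erf (ξ h₀) / (1 + (h₀ * Real.sqrt (π * α) / k) * erf (ξ h₀))) *
              (1 - erf (x / (2 * Real.sqrt (α * t))) / erf (ξ h₀))) atTop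
          (nhds (-Dinf * (1 - erf (x / (2 * Real.sqrt (α * t))) / erf ξinf))) :=
  stmt_10_general ρ c k ℓ γ Dinf α ε h₀star hρ hc hk hℓ hγ hD hα hε1 ξ μ ξinf μinf hξpos hξeq hμ
    hξinfpos hξinfeq hμinf
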